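/- arXiv:1903.05490 — 3 statements merged into one kernel-verified Lean document; each statement's English description precedes it below -/
import Mathlib

section
/- Let (X, d) be a separable metric space and x ∈ X. Then the set of radii r ∈ ℝ for which the closure of the open ball B(x, r) is a proper subset of the closed ball {y : d(x,y) ≤ r} is countable. -/
/-- In a separable metric space, for any point `x`, the set of radii `r` for which the
closure of the open ball `B(x,r)` differs from the closed ball of radius `r` is countable. -/
theorem closure_ball_ne_closedBall_countable
    {X : Type*} [MetricSpace X] [TopologicalSpace.SeparableSpace X] (x : X) :
    {r : ℝ | closure (Metric.ball x r) ≠ Metric.closedBall x r}.Countable := by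
  classical
  obtain ⟨D, Dcount, Ddense⟩ := TopologicalSpace.exists_countable_dense X
  set S := {r : ℝ | closure (Metric.ball x r) ≠ Metric.closedBall x r} with hS
  have H : ∀ r : S, ∃ (y p : X) (q : ℚ) (ε : ℝ), p ∈ D ∧ 0 < ε ∧ dist x y ≤ (r : ℝ) ∧
      (∀ b ∈ Metric.ball x (r : ℝ), ε ≤ dist y b) ∧ 0 < q ∧ (q : ℝ) < ε ∧
      dist y p < (q : ℝ) / 2 := by
    rintro ⟨r, hr⟩
    have hsub : closure (Metric.ball x r) ⊆ Metric.closedBall x r :=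
      Metric.closure_ball_subset_closedBall
    obtain ⟨y, hy1, hy2⟩ := Set.exists_of_ssubset (hsub.ssubset_of_ne hr)
    rw [Metric.mem_closure_iff] at hy2
    push_neg at hy2
    obtain ⟨ε, hε, hdisj⟩ := hy2
    obtain ⟨q, hq0, hqε⟩ := exists_rat_btwn hε
    have hy : y ∈ closure D := Ddense y
    rw [Metric.mem_closure_iff] at hy
    obtain ⟨p, hp, hyp⟩ := hy ((q : ℝ) / 2) (by positivity)
    exact ⟨y, p, q, ε, hp, hε, Metric.mem_closedBall'.mp hy1, hdisj,
      by exact_mod_cast hq0, hqε, hyp⟩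
  choose y p q ε hp hε hxy hdisj hq hqε hyp using H
  have key : ∀ r s : S, (r : ℝ) < s → p r = p s → q r = q s → False := by
    intro r s hrs hps hqs
    have h1 : y r ∈ Metric.ball x (s : ℝ) := by
      rw [Metric.mem_ball']
      exact lt_of_le_of_lt (hxy r) hrs
    have h2 : ε s ≤ dist (y s) (y r) := hdisj s (y r) h1
    have h3 : dist (y s) (y r) ≤ dist (y s) (p s) + dist (p s) (y r) := dist_triangle _ _ _
    have h4 : dist (p s) (y r) < (q r : ℝ) / 2 := by
      rw [← hps, dist_comm]; exact hyp r
    have h5 : dist (y s) (p s) < (q s : ℝ) / 2 := hyp s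
    have : dist (y s) (y r) < (q s : ℝ) := by
      rw [hqs] at h4
      calc dist (y s) (y r) ≤ dist (y s) (p s) + dist (p s) (y r) := h3
        _ < (q s : ℝ) / 2 + (q s : ℝ) / 2 := by linarith
        _ = (q s : ℝ) := by ring
    linarith [hqε s]
  have finj : Function.Injective (fun r : S => ((⟨p r, hp r⟩ : D), q r)) := by
    intro r s hrs
    simp only [Prod.mk.injEq, Subtype.mk.injEq] at hrs
    rcases lt_trichotomy (r : ℝ) (s : ℝ) with h | h | h
    · exact absurd (key r s h hrs.1 hrs.2) (by simp)
    · exact Subtype.ext h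
    · exact absurd (key s r h hrs.1.symm hrs.2.symm) (by simp)
  haveI := Dcount.to_subtype
  haveI : Countable S := finj.countable
  exact Set.countable_coe_iff.mp this
end

section
/- Let X be a topological space with a classical ercs ((U_n), (B_n), R), and let p ∈ {0,1}^ℕ be consistent. Define A = {x ∈ X | ∀ n, x ∈ U_n → p(n) = 1}. Then for every open set U ⊆ X, A ∩ U ≠ ∅ if and only if there exist n, ℓ ∈ ℕ with p(n) = 1, (n,ℓ) ∈ R, and B_ℓ ⊆ U. -/
/-- Consistency of `p : ℕ → Bool` with respect to an ercs `(U, B, R)`. -/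
def Consistent {X : Type*} (U : ℕ → Set X) (B : ℕ → Set X) (R : ℕ → ℕ → Prop)
    (p : ℕ → Bool) : Prop :=
  ∀ (n k : ℕ) (L : Finset ℕ), p n = true → R n k → (B k ⊆ ⋃ i ∈ L, U i) →
    ∃ i ∈ L, p i = true

/-- If `p` is consistent and `A = {x | ∀ n, x ∈ U n → p n = true}`, then for every open
`V`, `A` meets `V` iff there are `n, ℓ` with `p n = true`, `R n ℓ` and `B ℓ ⊆ V`. -/
theorem consistent_set_meets_iff {X : Type*} [TopologicalSpace X]
    (U : ℕ → Set X) (B : ℕ → Set X) (R : ℕ → ℕ → Prop)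
    (hU : ∀ n, IsOpen (U n)) (hB : ∀ n, IsCompact (B n))
    (hR : ∀ m n, R m n → U m ⊆ B n)
    (hmain : ∀ V : Set X, IsOpen V →
      V = ⋃ n ∈ {n | B n ⊆ V}, ⋃ m ∈ {m | R m n}, U m)
    (p : ℕ → Bool) (hp : Consistent U B R p) :
    ∀ V : Set X, IsOpen V →
      (({x : X | ∀ n, x ∈ U n → p n = true} ∩ V).Nonempty ↔
        ∃ n ℓ, p n = true ∧ R n ℓ ∧ B ℓ ⊆ V) := by
  intro V hV
  constructor
  · rintro ⟨x, hxA, hxV⟩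
    rw [hmain V hV] at hxV
    simp only [Set.mem_iUnion, Set.mem_setOf_eq] at hxV
    obtain ⟨ℓ, hℓ, m, hm, hxm⟩ := hxV
    exact ⟨m, ℓ, hxA m hxm, hm, hℓ⟩
  · rintro ⟨n, ℓ, hpn, hnℓ, hℓV⟩
    by_contra hne
    rw [Set.not_nonempty_iff_eq_empty] at hne
    have hcov : B ℓ ⊆ ⋃ i ∈ {i | p i = false}, U i := by
      intro x hx
      by_contra hxc
      have hxA : x ∈ {x : X | ∀ n, x ∈ U n → p n = true} := by
        intro m hm
        by_contra hpm
        exact hxc (Set.mem_biUnion (show p m = false by simpa using hpm) hm)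
      have : x ∈ ({x : X | ∀ n, x ∈ U n → p n = true} ∩ V) := ⟨hxA, hℓV hx⟩
      rw [hne] at this
      exact this
    obtain ⟨t, hts, htfin, htcov⟩ :=
      (hB ℓ).elim_finite_subcover_image (fun i _ => hU i) hcov
    have hcov' : B ℓ ⊆ ⋃ i ∈ htfin.toFinset, U i := by
      intro x hx
      obtain ⟨i, hi, hxi⟩ := Set.mem_iUnion₂.mp (htcov hx)
      exact Set.mem_iUnion₂.mpr ⟨i, htfin.mem_toFinset.mpr hi, hxi⟩
    obtain ⟨i, hiL, hpi⟩ := hp n ℓ htfin.toFinset hpn hnℓ hcov'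
    have : p i = false := hts (htfin.mem_toFinset.mp hiL)
    simp [hpi] at this
end

section
/- In the metric space S = {∞} ∪ (ℕ × [0,1]) with d(∞,(n,x)) = 2^{-n}+x, d((n,x),(n,y)) = |x-y|, d((n,x),(m,y)) = x+y+2^{-n}+2^{-m} for n ≠ m, no closed ball centered at ∞ of positive radius is compact. In particular, S is not locally compact at ∞. -/
/-- The star space `S = {∞} ∪ (ℕ × [0,1])`, with `none` playing the role of `∞`. -/
abbrev StarSpace : Type := Option (ℕ × Set.Icc (0:ℝ) 1)

/-- The distance on `S`. -/
noncomputable def starDist : StarSpace → StarSpace → ℝ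
  | none, none => 0
  | none, some (n, x) => (1/2 : ℝ)^n + x
  | some (n, x), none => (1/2 : ℝ)^n + x
  | some (n, x), some (m, y) =>
      if n = m then |(x : ℝ) - y| else (x : ℝ) + y + (1/2 : ℝ)^n + (1/2 : ℝ)^m

/-- The metric topology on `S`: generated by the open balls of `starDist`. -/
def starTop : TopologicalSpace StarSpace :=
  TopologicalSpace.generateFrom {V | ∃ a r, V = {b | starDist a b < r}}

lemma starDist_self (a : StarSpace) : starDist a a = 0 := by
  rcases a with _ | ⟨n, x⟩ <;> simp [starDist]

/-- Triangle inequality through `none`. -/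
lemma starDist_tri (a b : StarSpace) :
    starDist a b ≤ starDist a none + starDist none b := by
  rcases a with _ | ⟨n, x⟩ <;> rcases b with _ | ⟨m, y⟩ <;>
    simp only [starDist]
  · linarith
  · linarith
  · linarith
  · rcases x with ⟨x, hx0, hx1⟩
    rcases y with ⟨y, hy0, hy1⟩
    by_cases h : n = m
    · subst h
      simp only [if_pos rfl, if_true]
      have h1 : |x - y| ≤ x + y := abs_le.mpr ⟨by linarith, by linarith⟩
      have h2 : (0:ℝ) < (1/2)^n := by positivity
      linarith
    · simp only [if_neg h]
      linarith

/-- The standard infinite sequence at scale `j`: points `(j+1+ℓ, 2^{-(j+1)})`. -/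
noncomputable def starPt (j ℓ : ℕ) : StarSpace :=
  some (j + 1 + ℓ, ⟨(1/2:ℝ)^(j+1), by positivity, by
    apply pow_le_one₀ <;> norm_num⟩)

lemma starDist_none_starPt (j ℓ : ℕ) :
    starDist none (starPt j ℓ) = (1/2:ℝ)^(j+1+ℓ) + (1/2:ℝ)^(j+1) := rfl

/-- No compact set can contain the whole sequence `starPt j`. -/
lemma not_compact_of_seq (j : ℕ) (K : Set StarSpace)
    (hK : ∀ ℓ : ℕ, starPt j ℓ ∈ K) : ¬ @IsCompact StarSpace starTop K := by
  letI : TopologicalSpace StarSpace := starTop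
  intro hc
  set U : StarSpace → Set StarSpace := fun a => {b | starDist a b < (1/2:ℝ)^(j+2)} with hU
  have hUopen : ∀ a, IsOpen (U a) := fun a =>
    TopologicalSpace.GenerateOpen.basic _ ⟨a, (1/2:ℝ)^(j+2), rfl⟩
  have hcover : K ⊆ ⋃ a, U a := by
    intro b _
    exact Set.mem_iUnion.2 ⟨b, by simp only [U, Set.mem_setOf_eq, starDist_self]; positivity⟩
  obtain ⟨t, ht⟩ := hc.elim_finite_subcover U hUopen hcover
  have hmem : ∀ ℓ : ℕ, ∃ a ∈ t, starPt j ℓ ∈ U a := by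
    intro ℓ
    have := ht (hK ℓ)
    simpa using this
  choose g hg1 hg2 using hmem
  -- if starPt j ℓ ∈ U a then a = some (j+1+ℓ, y) for some y
  have hkey : ∀ (ℓ : ℕ) (a : StarSpace), starPt j ℓ ∈ U a →
      ∃ y, a = some (j + 1 + ℓ, y) := by
    intro ℓ a ha
    rcases a with _ | ⟨m, y⟩
    · exfalso
      simp only [U, Set.mem_setOf_eq, starDist_none_starPt] at ha
      have h1 : (0:ℝ) < (1/2)^(j+1+ℓ) := by positivity
      have h2 : ((1/2:ℝ))^(j+2) ≤ (1/2)^(j+1) := by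
        apply pow_le_pow_of_le_one (by norm_num) (by norm_num) (by omega)
      linarith
    · by_cases h : m = j + 1 + ℓ
      · exact ⟨y, by rw [h]⟩
      · exfalso
        rcases y with ⟨y, hy0, hy1⟩
        simp only [U, Set.mem_setOf_eq, starPt, starDist, h, if_false] at ha
        have h2 : ((1/2:ℝ))^(j+2) ≤ (1/2)^(j+1) := by
          apply pow_le_pow_of_le_one (by norm_num) (by norm_num) (by omega)
        have h3 : (0:ℝ) < (1/2)^m := by positivity
        have h4 : (0:ℝ) < (1/2)^(j+1+ℓ) := by positivity
        linarith
  have hinj : Function.Injective g := by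
    intro ℓ ℓ' h
    obtain ⟨y, hy⟩ := hkey ℓ (g ℓ) (hg2 ℓ)
    obtain ⟨y', hy'⟩ := hkey ℓ' (g ℓ') (hg2 ℓ')
    rw [h, hy'] at hy
    have h5 := congrArg Prod.fst (Option.some_inj.mp hy)
    simp only at h5
    omega
  have : Function.Injective (fun ℓ : ℕ => (⟨g ℓ, hg1 ℓ⟩ : {a // a ∈ t})) := by
    intro ℓ ℓ' h
    exact hinj (congrArg Subtype.val h)
  have : Finite ℕ := Finite.of_injective _ this
  exact not_finite ℕ

/-- An open set containing `none` contains a ball around `none`. -/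
lemma ball_subset_of_open (U : Set StarSpace)
    (h : TopologicalSpace.GenerateOpen {V | ∃ a r, V = {b | starDist a b < r}} U)
    (hn : none ∈ U) : ∃ ε > 0, {b | starDist none b < ε} ⊆ U := by
  induction h with
  | basic V hV =>
    obtain ⟨a, r, rfl⟩ := hV
    refine ⟨r - starDist a none, by simpa using hn, fun b hb => ?_⟩
    simp only [Set.mem_setOf_eq] at hb ⊢
    have := starDist_tri a b
    linarith
  | univ => exact ⟨1, one_pos, fun _ _ => trivial⟩
  | inter V W _ _ ihV ihW =>
    obtain ⟨ε1, hε1, h1⟩ := ihV hn.1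
    obtain ⟨ε2, hε2, h2⟩ := ihW hn.2
    refine ⟨min ε1 ε2, lt_min hε1 hε2, fun b hb => ?_⟩
    simp only [Set.mem_setOf_eq, lt_min_iff] at hb
    exact ⟨h1 hb.1, h2 hb.2⟩
  | sUnion S _ ih =>
    obtain ⟨V, hVS, hnV⟩ := hn
    obtain ⟨ε, hε, hb⟩ := ih V hVS hnV
    exact ⟨ε, hε, fun b h => ⟨V, hVS, hb h⟩⟩

/-- No closed ball centered at `∞` of positive radius is compact; in particular `S` is
not locally compact at `∞`. -/
theorem starSpace_not_locallyCompact_at_infty :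
    (∀ r : ℝ, 0 < r → ¬ @IsCompact StarSpace starTop {b | starDist none b ≤ r}) ∧
    ¬ ∃ K : Set StarSpace, @IsCompact StarSpace starTop K ∧ K ∈ @nhds StarSpace starTop none := by
  letI : TopologicalSpace StarSpace := starTop
  have key : ∀ (r : ℝ), 0 < r → ∀ K : Set StarSpace,
      {b | starDist none b ≤ r} ⊆ K → ¬ IsCompact K := by
    intro r hr K hKsub
    obtain ⟨j, hj⟩ := exists_pow_lt_of_lt_one hr (by norm_num : (1/2:ℝ) < 1)
    apply not_compact_of_seq j K
    intro ℓ
    apply hKsub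
    simp only [Set.mem_setOf_eq, starDist_none_starPt]
    have h1 : ((1/2:ℝ))^(j+1+ℓ) ≤ (1/2)^(j+1) := by
      apply pow_le_pow_of_le_one (by norm_num) (by norm_num) (by omega)
    have h2 : ((1/2:ℝ))^(j+1) + (1/2)^(j+1) = (1/2)^j := by ring
    linarith
  constructor
  · intro r hr
    exact key r hr _ (fun _ h => h)
  · rintro ⟨K, hKc, hKn⟩
    obtain ⟨U, hUK, hUopen, hnU⟩ := mem_nhds_iff.mp hKn
    obtain ⟨ε, hε, hball⟩ := ball_subset_of_open U hUopen hnU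
    exact key (ε/2) (by linarith) K (fun b hb => hUK (hball (by
      simp only [Set.mem_setOf_eq] at hb ⊢; linarith))) hKc
end
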